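/- arXiv:2309.00847 — 4 statements merged into one kernel-verified Lean document; each statement's English description precedes it below -/
import Mathlib

section
/- Let N > 1 be a real number and let u : ℝ → ℝ be a Lipschitz function with compact support. Then the one-dimensional weighted Heisenberg–Pauli–Weyl inequality holds on the half-line with weight x^{N−1}: (∫₀^∞ u'(x)² x^{N−1} dx) · (∫₀^∞ x² u(x)² x^{N−1} dx) ≥ (N²/4) · (∫₀^∞ u(x)² x^{N−1} dx)². -/
open MeasureTheory Set Filter Topology intervalIntegral

/-- Sequential slope convergence. -/
lemma seq_slope {f : ℝ → ℝ} {c d : ℝ} (hd : HasDerivAt f d c) :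
    Tendsto (fun n : ℕ => (f (c + 1 / (n + 1)) - f c) / (1 / (n + 1))) atTop (𝓝 d) := by
  have hslope := hasDerivAt_iff_tendsto_slope.1 hd
  have hseq : Tendsto (fun n : ℕ => c + 1 / ((n : ℝ) + 1)) atTop (𝓝[≠] c) := by
    apply tendsto_nhdsWithin_of_tendsto_nhds_of_eventually_within
    · have : Tendsto (fun n : ℕ => 1 / ((n : ℝ) + 1)) atTop (𝓝 0) :=
        tendsto_one_div_add_atTop_nhds_zero_nat
      simpa using (tendsto_const_nhds.add this)
    · filter_upwards with n
      have : (0 : ℝ) < 1 / ((n : ℝ) + 1) := by positivity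
      simp only [mem_compl_iff, mem_singleton_iff]
      intro h
      nlinarith [h]
  have := hslope.comp hseq
  refine this.congr fun n => ?_
  have hne : (0 : ℝ) < 1 / ((n : ℝ) + 1) := by positivity
  simp only [Function.comp, slope_def_field, add_sub_cancel_left]

/-- Cauchy-Schwarz for integrals. -/
lemma cs_integral {μ : Measure ℝ} {f g : ℝ → ℝ}
    (hf : Integrable (fun x => f x ^ 2) μ) (hg : Integrable (fun x => g x ^ 2) μ)
    (hfg : Integrable (fun x => f x * g x) μ) :
    (∫ x, f x * g x ∂μ) ^ 2 ≤ (∫ x, f x ^ 2 ∂μ) * (∫ x, g x ^ 2 ∂μ) := by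
  set A := ∫ x, f x ^ 2 ∂μ with hA
  set B := ∫ x, g x ^ 2 ∂μ with hB
  set C := ∫ x, f x * g x ∂μ with hC
  have key : ∀ t : ℝ, 0 ≤ B * (t * t) + (2 * C) * t + A := by
    intro t
    have h3 : ∫ x, ((t * g x + f x) ^ 2) ∂μ = B * (t * t) + (2 * C) * t + A := by
      have e : (fun x => (t * g x + f x) ^ 2)
          = fun x => (t * t) * g x ^ 2 + ((2 * t) * (f x * g x) + f x ^ 2) := by
        funext x; ring
      have i1 : Integrable (fun x => 2 * t * (f x * g x) + f x ^ 2) μ :=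
        (hfg.const_mul (2*t)).add hf
      have i2 : Integrable (fun x => t * t * g x ^ 2) μ := hg.const_mul (t*t)
      have i3 : Integrable (fun x => 2 * t * (f x * g x)) μ := hfg.const_mul (2*t)
      rw [e, integral_add i2 i1, integral_add i3 hf, MeasureTheory.integral_const_mul, MeasureTheory.integral_const_mul]
      ring
    have h2 : 0 ≤ ∫ x, ((t * g x + f x) ^ 2) ∂μ := integral_nonneg fun x => sq_nonneg _
    linarith
  have hd := discrim_le_zero key
  rw [discrim] at hd
  nlinarith [hd]

/-- FTC for functions with bounded difference quotients (e.g. Lipschitz) that are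
a.e. differentiable. -/
lemma ftc_lipschitz {g : ℝ → ℝ} {a b K : ℝ} (hab : a < b)
    (hcont : Continuous g)
    (hquot : ∀ x ∈ Icc a b, ∀ h : ℝ, 0 < h → h ≤ 1 → |g (x + h) - g x| ≤ K * h)
    (hdiff : ∀ᵐ x, x ∈ Ioo a b → DifferentiableAt ℝ g x) :
    ∫ x in Ioc a b, deriv g x = g b - g a := by
  set F : ℝ → ℝ := fun t => ∫ x in a..t, g x with hF
  have hFd : ∀ c : ℝ, HasDerivAt F (g c) c := fun c =>
    intervalIntegral.integral_hasDerivAt_right (hcont.intervalIntegrable _ _)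
      (hcont.stronglyMeasurableAtFilter _ _) hcont.continuousAt
  set φ : ℕ → ℝ → ℝ := fun n x => (g (x + 1 / (n + 1)) - g x) / (1 / (n + 1)) with hφ
  -- Step A : explicit value of ∫ φ n
  have stepA : ∀ n : ℕ, ∫ x in a..b, φ n x
      = (F (b + 1 / (n + 1)) - F b) / (1 / (n + 1))
        - (F (a + 1 / (n + 1)) - F a) / (1 / (n + 1)) := by
    intro n
    set h : ℝ := 1 / ((n : ℝ) + 1) with hh
    have hgi : IntervalIntegrable g volume a b := hcont.intervalIntegrable _ _
    have hgi' : IntervalIntegrable (fun x => g (x + h)) volume a b :=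
      (hcont.comp (continuous_id.add continuous_const)).intervalIntegrable _ _
    have e1 : ∫ x in a..b, φ n x = ((∫ x in a..b, g (x + h)) - ∫ x in a..b, g x) / h := by
      rw [← intervalIntegral.integral_sub hgi' hgi, ← intervalIntegral.integral_div]
    rw [e1, intervalIntegral.integral_comp_add_right]
    have e2 : (∫ x in a..(a + h), g x) + ∫ x in (a + h)..(b + h), g x
        = ∫ x in a..(b + h), g x :=
      intervalIntegral.integral_add_adjacent_intervals (hcont.intervalIntegrable _ _)
        (hcont.intervalIntegrable _ _)
    have : F (b + h) = F (a + h) + ∫ x in (a + h)..(b + h), g x := by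
      simp only [hF]; rw [← e2]
    have hFa : F a = 0 := intervalIntegral.integral_same
    rw [this, hFa]
    ring
  -- Step B : the integrals converge to g b - g a
  have stepB : Tendsto (fun n => ∫ x in a..b, φ n x) atTop (𝓝 (g b - g a)) := by
    have hb' := seq_slope (hFd b)
    have ha' := seq_slope (hFd a)
    have := hb'.sub ha'
    refine this.congr fun n => (stepA n).symm
  -- Step C : dominated convergence
  have stepC : Tendsto (fun n => ∫ x in a..b, φ n x) atTop (𝓝 (∫ x in Ioc a b, deriv g x)) := by
    have hrw : ∀ n, ∫ x in a..b, φ n x = ∫ x in Ioc a b, φ n x := fun n =>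
      intervalIntegral.integral_of_le hab.le
    simp only [hrw]
    apply tendsto_integral_of_dominated_convergence (bound := fun _ => |K|)
    · intro n
      exact ((hcont.comp (continuous_id.add continuous_const)).sub hcont).div_const _
        |>.aestronglyMeasurable
    · exact integrable_const _
    · intro n
      filter_upwards [ae_restrict_mem measurableSet_Ioc] with x hx
      have h0 : (0 : ℝ) < 1 / ((n : ℝ) + 1) := by positivity
      have h1 : (1 : ℝ) / ((n : ℝ) + 1) ≤ 1 := by
        rw [div_le_one (by positivity)]; simp
      have := hquot x ⟨hx.1.le, hx.2⟩ _ h0 h1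
      have : |g (x + 1 / (n + 1)) - g x| / (1 / ((n:ℝ) + 1)) ≤ K := by
        rw [div_le_iff₀ h0]; simpa using this
      simp only [φ, Real.norm_eq_abs, abs_div, abs_of_pos h0]
      exact this.trans (le_abs_self K)
    · have hdiff' : ∀ᵐ x ∂(volume.restrict (Ioc a b)), x ∈ Ioo a b → DifferentiableAt ℝ g x :=
        ae_restrict_of_ae hdiff
      have hmem : ∀ᵐ x ∂(volume.restrict (Ioc a b)), x ∈ Ioo a b := by
        rw [Measure.restrict_congr_set Ioo_ae_eq_Ioc.symm]
        exact ae_restrict_mem measurableSet_Ioo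
      filter_upwards [hdiff', hmem] with x hx hxm
      exact seq_slope (hx hxm).hasDerivAt
  exact tendsto_nhds_unique stepC stepB

set_option maxHeartbeats 2000000 in
/-- One-dimensional weighted Heisenberg–Pauli–Weyl inequality on the half-line
with weight `x^(N-1)`, for a Lipschitz function `u : ℝ → ℝ` with compact support. -/
theorem hpw_one_dimensional (N : ℝ) (hN : 1 < N) (u : ℝ → ℝ)
    (hLip : ∃ K : NNReal, LipschitzWith K u) (hsupp : HasCompactSupport u) :
    (∫ x in Ioi (0:ℝ), (deriv u x) ^ 2 * x ^ (N - 1)) *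
        (∫ x in Ioi (0:ℝ), x ^ 2 * (u x) ^ 2 * x ^ (N - 1)) ≥
      (N ^ 2 / 4) * (∫ x in Ioi (0:ℝ), (u x) ^ 2 * x ^ (N - 1)) ^ 2 := by
  obtain ⟨K, hLipK⟩ := hLip
  have hu_cont : Continuous u := hLipK.continuous
  obtain ⟨M, hM⟩ := hsupp.exists_bound_of_continuous hu_cont
  have hM' : ∀ x, |u x| ≤ M := fun x => by simpa [Real.norm_eq_abs] using hM x
  have hM0 : 0 ≤ M := le_trans (abs_nonneg _) (hM' 0)
  obtain ⟨r, hr⟩ := hsupp.isBounded.subset_closedBall 0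
  set T : ℝ := |r| with hT
  have hT0 : 0 ≤ T := abs_nonneg r
  have hu0 : ∀ x : ℝ, T < x → u x = 0 := by
    intro x hx
    apply image_eq_zero_of_notMem_tsupport
    intro hmem
    have h1 := hr hmem
    rw [Real.closedBall_eq_Icc] at h1
    have h2 := h1.2
    have h3 : r ≤ T := le_abs_self r
    simp only [zero_add] at h2
    linarith
  have hd0 : ∀ x : ℝ, T < x → deriv u x = 0 := by
    intro x hx
    have hev : u =ᶠ[nhds x] (fun _ => 0) :=
      Filter.eventually_of_mem (Ioi_mem_nhds hx) (fun y hy => hu0 y hy)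
    rw [hev.deriv_eq]
    exact deriv_const x 0
  set b : ℝ := T + 1 with hbdef
  have hb0 : (0:ℝ) < b := by linarith
  have hTb : T < b := by linarith
  have hKd : ∀ x, |deriv u x| ≤ (K:ℝ) := fun x => by
    simpa [Real.norm_eq_abs] using norm_deriv_le_of_lipschitz hLipK (x₀ := x)
  have hK0 : (0:ℝ) ≤ K := K.coe_nonneg
  have hN0 : (0:ℝ) < N := by linarith
  -- continuity of weights
  have c_w : Continuous (fun x : ℝ => x ^ (N - 1)) := by
    rw [continuous_iff_continuousAt]
    exact fun x => Real.continuousAt_rpow_const x _ (Or.inr (by linarith))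
  have c_wN : Continuous (fun x : ℝ => x ^ N) := by
    rw [continuous_iff_continuousAt]
    exact fun x => Real.continuousAt_rpow_const x _ (Or.inr (by linarith))
  have m_der : Measurable (deriv u) := measurable_deriv u
  -- bounded & measurable implies integrable on Ioc 0 b
  have key_int : ∀ (f : ℝ → ℝ) (c : ℝ), AEStronglyMeasurable f (volume : Measure ℝ) →
      (∀ x ∈ Ioc (0:ℝ) b, |f x| ≤ c) → IntegrableOn f (Ioc 0 b) := by
    intro f c hm hbd
    refine Measure.integrableOn_of_bounded (M := c) (measure_Ioc_lt_top.ne) hm ?_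
    filter_upwards [ae_restrict_mem measurableSet_Ioc] with x hx
    simpa [Real.norm_eq_abs] using hbd x hx
  have habs : ∀ p q P Q : ℝ, |p| ≤ P → 0 ≤ q → q ≤ Q → |p * q| ≤ P * Q := by
    intro p q P Q h1 h2 h3
    rw [abs_mul, abs_of_nonneg h2]
    exact mul_le_mul h1 h3 h2 ((abs_nonneg p).trans h1)
  have hsq : ∀ d P : ℝ, |d| ≤ P → |d ^ 2| ≤ P ^ 2 := fun d P h => by
    rw [abs_pow]; exact pow_le_pow_left₀ (abs_nonneg _) h 2
  -- weight bounds on Ioc 0 b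
  have hw : ∀ x ∈ Ioc (0:ℝ) b, 0 ≤ x ^ (N-1) ∧ x ^ (N-1) ≤ b ^ (N-1) := fun x hx =>
    ⟨Real.rpow_nonneg hx.1.le _, Real.rpow_le_rpow hx.1.le hx.2 (by linarith)⟩
  have hwN : ∀ x ∈ Ioc (0:ℝ) b, 0 ≤ x ^ N ∧ x ^ N ≤ b ^ N := fun x hx =>
    ⟨Real.rpow_nonneg hx.1.le _, Real.rpow_le_rpow hx.1.le hx.2 (by linarith)⟩
  -- integrability of the four integrands on Ioc 0 b
  have hint1 : IntegrableOn (fun x => (deriv u x) ^ 2 * x ^ (N-1)) (Ioc 0 b) := by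
    refine key_int _ ((K:ℝ)^2 * b ^ (N-1))
      (((m_der.pow_const 2).mul c_w.measurable).aestronglyMeasurable) ?_
    exact fun x hx => habs _ _ _ _ (hsq _ _ (hKd x)) (hw x hx).1 (hw x hx).2
  have hint2 : IntegrableOn (fun x => x ^ 2 * (u x) ^ 2 * x ^ (N-1)) (Ioc 0 b) := by
    refine key_int _ ((b^2 * M^2) * b ^ (N-1))
      ((((measurable_id.pow_const 2).mul ((hu_cont.measurable).pow_const 2)).mul
        c_w.measurable).aestronglyMeasurable) ?_
    intro x hx
    refine habs _ _ _ _ ?_ (hw x hx).1 (hw x hx).2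
    rw [abs_mul]
    have h1 : |x ^ 2| ≤ b ^ 2 := hsq _ _ (by rw [abs_of_pos hx.1]; exact hx.2)
    have h2 : |(u x) ^ 2| ≤ M ^ 2 := hsq _ _ (hM' x)
    exact mul_le_mul h1 h2 (abs_nonneg _) (by positivity)
  have hint3 : IntegrableOn (fun x => (u x) ^ 2 * x ^ (N-1)) (Ioc 0 b) := by
    refine key_int _ (M^2 * b ^ (N-1))
      ((((hu_cont.measurable).pow_const 2).mul c_w.measurable).aestronglyMeasurable) ?_
    exact fun x hx => habs _ _ _ _ (hsq _ _ (hM' x)) (hw x hx).1 (hw x hx).2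
  have hint4 : IntegrableOn (fun x => u x * deriv u x * x ^ N) (Ioc 0 b) := by
    refine key_int _ ((M * K) * b ^ N)
      (((hu_cont.measurable.mul m_der).mul c_wN.measurable).aestronglyMeasurable) ?_
    intro x hx
    refine habs _ _ _ _ ?_ (hwN x hx).1 (hwN x hx).2
    rw [abs_mul]
    exact mul_le_mul (hM' x) (hKd x) (abs_nonneg _) hM0
  -- extension from Ioc 0 b to Ioi 0
  have hzero : ∀ f : ℝ → ℝ, (∀ x, b < x → f x = 0) → IntegrableOn f (Ioc 0 b) →
      IntegrableOn f (Ioi 0) ∧ ∫ x in Ioi (0:ℝ), f x = ∫ x in Ioc (0:ℝ) b, f x := by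
    intro f h0 hint
    have heq : EqOn f (fun _ => (0:ℝ)) (Ioi b) := fun x hx => h0 x hx
    have hIb : IntegrableOn f (Ioi b) := by
      rw [integrableOn_congr_fun heq measurableSet_Ioi]
      exact integrableOn_zero
    have hun : Ioc (0:ℝ) b ∪ Ioi b = Ioi 0 := Ioc_union_Ioi_eq_Ioi hb0.le
    have hdisj : Disjoint (Ioc (0:ℝ) b) (Ioi b) := Ioc_disjoint_Ioi le_rfl
    constructor
    · rw [← hun]; exact hint.union hIb
    · rw [← hun, setIntegral_union hdisj measurableSet_Ioi hint hIb,
        setIntegral_congr_fun measurableSet_Ioi heq, MeasureTheory.integral_zero, add_zero]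
  -- the function for integration by parts
  set G : ℝ → ℝ := fun y => u y ^ 2 * y ^ N with hG
  have hGcont : Continuous G := (hu_cont.pow 2).mul c_wN
  -- difference quotient bound for G
  set BB : ℝ := (b+1) ^ N with hBB
  set LL : ℝ := N * (b+1) ^ (N-1) with hLL
  have hBB0 : 0 ≤ BB := Real.rpow_nonneg (by linarith) _
  have hLL0 : 0 ≤ LL := mul_nonneg hN0.le (Real.rpow_nonneg (by linarith) _)
  have hϕd : ∀ y : ℝ, HasDerivAt (fun z : ℝ => z ^ N) (N * y ^ (N-1)) y := fun y =>
    Real.hasDerivAt_rpow_const (Or.inr hN.le)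
  have hϕlip : ∀ y ∈ Icc (0:ℝ) (b+1), ∀ z ∈ Icc (0:ℝ) (b+1),
      |(z:ℝ) ^ N - y ^ N| ≤ LL * |z - y| := by
    intro y hy z hz
    have := Convex.norm_image_sub_le_of_norm_hasDerivWithin_le
      (f := fun z : ℝ => z ^ N) (f' := fun y => N * y ^ (N-1)) (s := Icc (0:ℝ) (b+1))
      (fun w hw => (hϕd w).hasDerivWithinAt)
      (fun w hw => by
        rw [Real.norm_eq_abs, abs_mul, abs_of_pos hN0,
          abs_of_nonneg (Real.rpow_nonneg hw.1 _)]
        exact mul_le_mul_of_nonneg_left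
          (Real.rpow_le_rpow hw.1 hw.2 (by linarith)) hN0.le)
      (convex_Icc _ _) hy hz
    simpa [Real.norm_eq_abs] using this
  have hquot : ∀ x ∈ Icc (0:ℝ) b, ∀ h : ℝ, 0 < h → h ≤ 1 →
      |G (x + h) - G x| ≤ (2*M*(K:ℝ)*BB + M^2*LL) * h := by
    intro x hx h hh0 hh1
    have hxs : x ∈ Icc (0:ℝ) (b+1) := ⟨hx.1, by linarith [hx.2]⟩
    have hxhs : x + h ∈ Icc (0:ℝ) (b+1) := ⟨by linarith [hx.1], by linarith [hx.2]⟩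
    have e1 : |u (x+h) - u x| ≤ (K:ℝ) * h := by
      have := hLipK.dist_le_mul (x+h) x
      rw [Real.dist_eq, Real.dist_eq] at this
      simpa [abs_of_pos hh0] using this
    have e2 : |(x+h) ^ N - x ^ N| ≤ LL * h := by
      have := hϕlip x hxs (x+h) hxhs
      simpa [abs_of_pos hh0] using this
    have e5 : |(x+h) ^ N| ≤ BB := by
      rw [abs_of_nonneg (Real.rpow_nonneg hxhs.1 _)]
      exact Real.rpow_le_rpow hxhs.1 hxhs.2 hN0.le
    have t1 : |u (x+h) + u x| ≤ 2 * M := (abs_add_le _ _).trans (by linarith [hM' (x+h), hM' x])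
    have key : G (x+h) - G x
        = (u (x+h) - u x) * (u (x+h) + u x) * ((x+h) ^ N)
          + u x ^ 2 * ((x+h) ^ N - x ^ N) := by
      simp only [hG]; ring
    rw [key]
    calc |(u (x+h) - u x) * (u (x+h) + u x) * ((x+h) ^ N)
          + u x ^ 2 * ((x+h) ^ N - x ^ N)|
        ≤ |(u (x+h) - u x) * (u (x+h) + u x) * ((x+h) ^ N)|
          + |u x ^ 2 * ((x+h) ^ N - x ^ N)| := abs_add_le _ _
      _ ≤ ((K:ℝ) * h) * (2*M) * BB + M^2 * (LL * h) := by
          apply add_le_add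
          · rw [abs_mul, abs_mul]
            refine mul_le_mul (mul_le_mul e1 t1 (abs_nonneg _) (by positivity)) e5
              (abs_nonneg _) (by positivity)
          · rw [abs_mul]
            exact mul_le_mul (hsq _ _ (hM' x)) e2 (abs_nonneg _) (by positivity)
      _ = (2*M*(K:ℝ)*BB + M^2*LL) * h := by ring
  have hGdiff : ∀ᵐ x : ℝ, x ∈ Ioo (0:ℝ) b → DifferentiableAt ℝ G x := by
    filter_upwards [hLipK.ae_differentiableAt_of_real] with x hx _
    exact (hx.pow 2).mul (hϕd x).differentiableAt
  have hFTC : ∫ x in Ioc (0:ℝ) b, deriv G x = G b - G 0 :=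
    ftc_lipschitz hb0 hGcont hquot hGdiff
  have hGb : G b = 0 := by simp [hG, hu0 b hTb]
  have hG0 : G 0 = 0 := by
    simp [hG, Real.zero_rpow (by linarith : N ≠ 0)]
  -- identify deriv G a.e. on Ioc 0 b
  have hcongr : ∀ᵐ x ∂(volume.restrict (Ioc (0:ℝ) b)),
      deriv G x = 2 * (u x * deriv u x * x ^ N) + N * (u x ^ 2 * x ^ (N-1)) := by
    filter_upwards [ae_restrict_of_ae hLipK.ae_differentiableAt_of_real] with x hx
    have h1 : HasDerivAt u (deriv u x) x := hx.hasDerivAt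
    have h3 := (h1.pow 2).mul (hϕd x)
    have h4 : deriv G x = (2 * u x ^ (2-1) * deriv u x) * x ^ N
        + u x ^ 2 * (N * x ^ (N-1)) := h3.deriv
    have e21 : (2:ℕ) - 1 = 1 := rfl
    rw [h4, e21, pow_one]
    ring
  have hIoc : ∫ x in Ioc (0:ℝ) b,
      (2 * (u x * deriv u x * x ^ N) + N * (u x ^ 2 * x ^ (N-1))) = 0 := by
    rw [← integral_congr_ae hcongr, hFTC, hGb, hG0, sub_zero]
  -- extend everything to Ioi 0
  obtain ⟨hint4', heq4⟩ := hzero (fun x => u x * deriv u x * x ^ N)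
    (fun x hx => by simp [hu0 x (hTb.trans hx), hd0 x (hTb.trans hx)]) hint4
  obtain ⟨hint3', heq3⟩ := hzero (fun x => (u x) ^ 2 * x ^ (N-1))
    (fun x hx => by simp [hu0 x (hTb.trans hx)]) hint3
  obtain ⟨hint1', heq1⟩ := hzero (fun x => (deriv u x) ^ 2 * x ^ (N-1))
    (fun x hx => by simp [hd0 x (hTb.trans hx)]) hint1
  obtain ⟨hint2', heq2⟩ := hzero (fun x => x ^ 2 * (u x) ^ 2 * x ^ (N-1))
    (fun x hx => by simp [hu0 x (hTb.trans hx)]) hint2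
  set A : ℝ := ∫ x in Ioi (0:ℝ), (deriv u x) ^ 2 * x ^ (N-1) with hA
  set B : ℝ := ∫ x in Ioi (0:ℝ), x ^ 2 * (u x) ^ 2 * x ^ (N-1) with hB
  set C : ℝ := ∫ x in Ioi (0:ℝ), (u x) ^ 2 * x ^ (N-1) with hC
  set D : ℝ := ∫ x in Ioi (0:ℝ), u x * deriv u x * x ^ N with hD
  -- the key identity 2 D + N C = 0
  have hsum : ∫ x in Ioi (0:ℝ),
      (2 * (u x * deriv u x * x ^ N) + N * (u x ^ 2 * x ^ (N-1))) = 0 := by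
    have hsum_int : IntegrableOn
        (fun x => 2 * (u x * deriv u x * x ^ N) + N * (u x ^ 2 * x ^ (N-1))) (Ioc 0 b) :=
      (hint4.const_mul 2).add (hint3.const_mul N)
    have hsum_zero : ∀ x : ℝ, b < x →
        2 * (u x * deriv u x * x ^ N) + N * (u x ^ 2 * x ^ (N-1)) = 0 := by
      intro x hx
      simp [hu0 x (hTb.trans hx), hd0 x (hTb.trans hx)]
    obtain ⟨_, heqs⟩ := hzero _ hsum_zero hsum_int
    rw [heqs, hIoc]
  have hDC : 2 * D + N * C = 0 := by
    rw [hD, hC, ← MeasureTheory.integral_const_mul, ← MeasureTheory.integral_const_mul,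
      ← integral_add (hint4'.const_mul 2) (hint3'.const_mul N)]
    exact hsum
  -- Cauchy-Schwarz
  set p : ℝ → ℝ := fun x => x ^ ((N-1)/2) with hp
  set f : ℝ → ℝ := fun x => deriv u x * p x with hf
  set g : ℝ → ℝ := fun x => x * u x * p x with hg
  have hpp : ∀ x : ℝ, 0 < x → p x * p x = x ^ (N-1) := by
    intro x hx
    rw [hp, ← Real.rpow_add hx]
    norm_num
  have hxp : ∀ x : ℝ, 0 < x → x * x ^ (N-1) = x ^ N := by
    intro x hx
    nth_rewrite 1 [← Real.rpow_one x]
    rw [← Real.rpow_add hx]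
    norm_num
  have hef2 : (fun x => f x ^ 2)
      =ᵐ[volume.restrict (Ioi (0:ℝ))] (fun x => (deriv u x) ^ 2 * x ^ (N-1)) := by
    filter_upwards [ae_restrict_mem measurableSet_Ioi] with x hx
    have := hpp x hx
    calc f x ^ 2 = (deriv u x) ^ 2 * (p x * p x) := by rw [hf]; ring
      _ = (deriv u x) ^ 2 * x ^ (N-1) := by rw [this]
  have heg2 : (fun x => g x ^ 2)
      =ᵐ[volume.restrict (Ioi (0:ℝ))] (fun x => x ^ 2 * (u x) ^ 2 * x ^ (N-1)) := by
    filter_upwards [ae_restrict_mem measurableSet_Ioi] with x hx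
    calc g x ^ 2 = x ^ 2 * (u x) ^ 2 * (p x * p x) := by rw [hg]; ring
      _ = x ^ 2 * (u x) ^ 2 * x ^ (N-1) := by rw [hpp x hx]
  have hefg : (fun x => f x * g x)
      =ᵐ[volume.restrict (Ioi (0:ℝ))] (fun x => u x * deriv u x * x ^ N) := by
    filter_upwards [ae_restrict_mem measurableSet_Ioi] with x hx
    calc f x * g x = u x * deriv u x * (x * (p x * p x)) := by rw [hf, hg]; ring
      _ = u x * deriv u x * x ^ N := by rw [hpp x hx, hxp x hx]
  have hcs := cs_integral (μ := volume.restrict (Ioi (0:ℝ)))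
    (f := f) (g := g) (hint1'.congr hef2.symm) (hint2'.congr heg2.symm)
    (hint4'.congr hefg.symm)
  rw [integral_congr_ae hef2, integral_congr_ae heg2, integral_congr_ae hefg] at hcs
  have hDfin : D ^ 2 ≤ A * B := hcs
  have hDval : D = -(N * C) / 2 := by linarith
  have hfin : D ^ 2 = N ^ 2 / 4 * C ^ 2 := by rw [hDval]; ring
  linarith
end

section
/- Let (X,d) be a metric space, μ a Borel measure on X, x₀ ∈ X, N > 1 and k > 0, and suppose μ(B_ρ(x₀)) = k ω_N ρ^N for all ρ > 0. Then the Gaussian u_λ(x) = e^{−λ d(x₀,x)²} satisfies, for every λ > 0, the identity 2λ ∫_X d(x₀,x)² e^{−2λ d(x₀,x)²} dμ(x) = (N/2) ∫_X e^{−2λ d(x₀,x)²} dμ(x); consequently (∫_X 4λ² d(x₀,x)² e^{−2λ d(x₀,x)²} dμ) · (∫_X d(x₀,x)² e^{−2λ d(x₀,x)²} dμ) = (N²/4) · (∫_X e^{−2λ d(x₀,x)²} dμ)². -/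
open MeasureTheory Set

/-!
Pushed forward along `d(x₀, ·)`, the measure `μ` becomes `k ω_N N r^{N-1} dr` on `(0, ∞)`: both
give the half-line `(-∞, ρ)` the mass `k ω_N ρ^N`. Every radial integral is then a Gamma integral,
`∫₀^∞ r^q e^{-b r²} dr = b^{-(q+1)/2} Γ((q+1)/2) / 2`, and `Γ(s + 1) = s Γ(s)` with `q = N - 1`
gives `b ∫ d² e^{-b d²} dμ = (N/2) ∫ e^{-b d²} dμ`. The product identity is its square.
-/

/-- `ω_N = π^{N/2} / Γ(N/2 + 1)`, the volume of the unit ball in dimension `N`. -/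
noncomputable def omegaN (N : ℝ) : ℝ := Real.pi ^ (N / 2) / Real.Gamma (N / 2 + 1)

lemma omegaN_pos {N : ℝ} (hN : -2 < N) : 0 < omegaN N :=
  div_pos (Real.rpow_pos_of_pos Real.pi_pos _) (Real.Gamma_pos_of_pos (by linarith))

theorem MeasureTheory.Measure.ext_of_Iio' {α : Type*} [TopologicalSpace α] {m : MeasurableSpace α}
    [SecondCountableTopology α] [LinearOrder α] [OrderTopology α] [BorelSpace α] [NoMaxOrder α]
    (μ ν : Measure α) (hμ : ∀ b, μ (Iio b) ≠ ⊤) (h : ∀ b, μ (Iio b) = ν (Iio b)) : μ = ν := by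
  refine μ.ext_of_Ico' ν (fun _ b _ ↦ ne_top_of_le_ne_top (hμ b) (measure_mono Ico_subset_Iio_self))
    fun a b hab ↦ ?_
  have hsub : Iio a ⊆ Iio b := Iio_subset_Iio hab.le
  rw [← Iio_sdiff_Iio, measure_sdiff hsub measurableSet_Iio.nullMeasurableSet (hμ a),
    measure_sdiff hsub measurableSet_Iio.nullMeasurableSet (h a ▸ hμ a), h a, h b]

theorem integral_rpow_add_two_mul_exp_neg_mul_sq {q b : ℝ} (hq : -1 < q) (hb : 0 < b) :
    b * ∫ r in Ioi 0, r ^ (q + 2) * Real.exp (-b * r ^ 2) =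
      (q + 1) / 2 * ∫ r in Ioi 0, r ^ q * Real.exp (-b * r ^ 2) := by
  simp only [← Real.rpow_two]
  rw [integral_rpow_mul_exp_neg_mul_rpow two_pos (by linarith) hb,
    integral_rpow_mul_exp_neg_mul_rpow two_pos hq hb,
    show (q + 2 + 1) / 2 = (q + 1) / 2 + 1 by ring, Real.Gamma_add_one (by linarith),
    show -(q + 2 + 1) / 2 = -(q + 1) / 2 + -1 by ring, Real.rpow_add hb, Real.rpow_neg_one]
  field_simp

noncomputable def radialMeasure (C N : ℝ) : Measure ℝ :=
  (volume.restrict (Ioi 0)).withDensity fun r ↦ ENNReal.ofReal (C * N * r ^ (N - 1))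

section RadialMeasure

variable {C N : ℝ}

theorem radialMeasure_Iio (hC : 0 ≤ C) (hN : 0 < N) (ρ : ℝ) :
    radialMeasure C N (Iio ρ) = ENNReal.ofReal (C * max ρ 0 ^ N) := by
  rw [radialMeasure, withDensity_apply _ measurableSet_Iio,
    Measure.restrict_restrict measurableSet_Iio, Iio_inter_Ioi]
  rcases le_or_gt ρ 0 with hρ | hρ
  · rw [Ioo_eq_empty (not_lt.2 hρ), Measure.restrict_empty, lintegral_zero_measure,
      max_eq_right hρ, Real.zero_rpow hN.ne', mul_zero, ENNReal.ofReal_zero]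
  have hint : IntegrableOn (fun r : ℝ ↦ C * N * r ^ (N - 1)) (Ioo 0 ρ) :=
    ((intervalIntegral.integrableOn_Ioo_rpow_iff hρ).2 (by linarith)).const_mul (C * N)
  have hnonneg : 0 ≤ᵐ[volume.restrict (Ioo 0 ρ)] fun r : ℝ ↦ C * N * r ^ (N - 1) := by
    filter_upwards [ae_restrict_mem measurableSet_Ioo] with r hr
    have := hr.1.le
    positivity
  rw [← ofReal_integral_eq_lintegral_ofReal hint hnonneg, ← integral_Ioc_eq_integral_Ioo,
    ← intervalIntegral.integral_of_le hρ.le, intervalIntegral.integral_const_mul,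
    integral_rpow (Or.inl (by linarith)), sub_add_cancel, Real.zero_rpow hN.ne', sub_zero,
    max_eq_left hρ.le]
  congr 1
  field_simp

theorem integral_radialMeasure (hC : 0 ≤ C) (hN : 0 ≤ N) (φ : ℝ → ℝ) :
    ∫ r, φ r ∂radialMeasure C N = ∫ r in Ioi 0, C * N * r ^ (N - 1) * φ r := by
  rw [radialMeasure, integral_withDensity_eq_integral_toReal_smul (by fun_prop)
    (ae_of_all _ fun _ ↦ ENNReal.ofReal_lt_top)]
  refine setIntegral_congr_fun measurableSet_Ioi fun r hr ↦ ?_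
  have : 0 ≤ r := le_of_lt hr
  rw [smul_eq_mul, ENNReal.toReal_ofReal (by positivity)]

end RadialMeasure

section VolumeCone

variable {X : Type*} [MetricSpace X] [MeasurableSpace X] [BorelSpace X] {μ : Measure X} {x₀ : X}
  {C N : ℝ}

lemma measurable_dist_left : Measurable (dist x₀) :=
  (continuous_const.dist continuous_id).measurable

theorem map_dist_apply_Iio (ρ : ℝ) : μ.map (dist x₀) (Iio ρ) = μ (Metric.ball x₀ ρ) := by
  rw [Measure.map_apply measurable_dist_left measurableSet_Iio]
  congr 1
  ext x
  exact Metric.mem_ball'.symm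

theorem map_dist_eq_radialMeasure (hC : 0 ≤ C) (hN : 0 < N)
    (hball : ∀ ρ > 0, μ (Metric.ball x₀ ρ) = ENNReal.ofReal (C * ρ ^ N)) :
    μ.map (dist x₀) = radialMeasure C N := by
  have hIio : ∀ ρ, μ.map (dist x₀) (Iio ρ) = ENNReal.ofReal (C * max ρ 0 ^ N) := by
    intro ρ
    rw [map_dist_apply_Iio]
    rcases le_or_gt ρ 0 with hρ | hρ
    · rw [Metric.ball_eq_empty.2 hρ, measure_empty, max_eq_right hρ, Real.zero_rpow hN.ne',
        mul_zero, ENNReal.ofReal_zero]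
    · rw [hball ρ hρ, max_eq_left hρ.le]
  refine Measure.ext_of_Iio' _ _ (fun ρ ↦ hIio ρ ▸ ENNReal.ofReal_ne_top) fun ρ ↦ ?_
  rw [hIio, radialMeasure_Iio hC hN]

theorem integral_comp_dist_eq_integral_radial (hC : 0 ≤ C) (hN : 0 < N)
    (hball : ∀ ρ > 0, μ (Metric.ball x₀ ρ) = ENNReal.ofReal (C * ρ ^ N))
    {φ : ℝ → ℝ} (hφ : Measurable φ) :
    ∫ x, φ (dist x₀ x) ∂μ = ∫ r in Ioi 0, C * N * r ^ (N - 1) * φ r := by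
  rw [← integral_map measurable_dist_left.aemeasurable hφ.aestronglyMeasurable,
    map_dist_eq_radialMeasure hC hN hball, integral_radialMeasure hC hN.le]

theorem integral_dist_sq_mul_exp_neg_mul_dist_sq (hC : 0 ≤ C) (hN : 0 < N)
    (hball : ∀ ρ > 0, μ (Metric.ball x₀ ρ) = ENNReal.ofReal (C * ρ ^ N)) {b : ℝ} (hb : 0 < b) :
    b * ∫ x, dist x₀ x ^ 2 * Real.exp (-b * dist x₀ x ^ 2) ∂μ =
      N / 2 * ∫ x, Real.exp (-b * dist x₀ x ^ 2) ∂μ := by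
  rw [integral_comp_dist_eq_integral_radial hC hN hball (φ := fun r ↦ Real.exp (-b * r ^ 2))
      (by fun_prop),
    integral_comp_dist_eq_integral_radial hC hN hball
      (φ := fun r ↦ r ^ 2 * Real.exp (-b * r ^ 2)) (by fun_prop)]
  have hmoment : ∀ r ∈ Ioi (0 : ℝ), C * N * r ^ (N - 1) * (r ^ 2 * Real.exp (-b * r ^ 2)) =
      C * N * (r ^ (N - 1 + 2) * Real.exp (-b * r ^ 2)) := fun r hr ↦ by
    rw [Real.rpow_add hr, Real.rpow_two]
    ring
  rw [setIntegral_congr_fun measurableSet_Ioi hmoment]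
  simp only [mul_assoc (C * N)]
  rw [integral_const_mul, integral_const_mul]
  linear_combination C * N * integral_rpow_add_two_mul_exp_neg_mul_sq (q := N - 1) (by linarith) hb

end VolumeCone

/-- On an `N`-volume cone at `x₀` with density `k`, the Gaussians `u_λ = e^{-λ d(x₀,·)²}`
satisfy `2λ ∫ d² e^{-2λd²} dμ = (N/2) ∫ e^{-2λd²} dμ`, and consequently they attain
equality in the Heisenberg–Pauli–Weyl uncertainty principle. -/
theorem gaussian_equality_on_volume_cone {X : Type*} [MetricSpace X]
    [MeasurableSpace X] [BorelSpace X] (μ : Measure X) (x₀ : X)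
    (N k : ℝ) (hN : 1 < N) (hk : 0 < k)
    (hcone : ∀ ρ > (0:ℝ), μ (Metric.ball x₀ ρ) = ENNReal.ofReal (k * omegaN N * ρ ^ N))
    (lam : ℝ) (hlam : 0 < lam) :
    2 * lam * ∫ x, dist x₀ x ^ 2 * Real.exp (-2 * lam * dist x₀ x ^ 2) ∂μ =
        (N / 2) * ∫ x, Real.exp (-2 * lam * dist x₀ x ^ 2) ∂μ ∧
      (∫ x, 4 * lam ^ 2 * dist x₀ x ^ 2 * Real.exp (-2 * lam * dist x₀ x ^ 2) ∂μ) *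
          (∫ x, dist x₀ x ^ 2 * Real.exp (-2 * lam * dist x₀ x ^ 2) ∂μ) =
        (N ^ 2 / 4) * (∫ x, Real.exp (-2 * lam * dist x₀ x ^ 2) ∂μ) ^ 2 := by
  have hC : 0 ≤ k * omegaN N := (mul_pos hk (omegaN_pos (by linarith))).le
  have hvirial : 2 * lam * ∫ x, dist x₀ x ^ 2 * Real.exp (-2 * lam * dist x₀ x ^ 2) ∂μ =
      N / 2 * ∫ x, Real.exp (-2 * lam * dist x₀ x ^ 2) ∂μ := by
    simpa only [neg_mul] using
      integral_dist_sq_mul_exp_neg_mul_dist_sq hC (by linarith) hcone (by positivity : 0 < 2 * lam)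
  refine ⟨hvirial, ?_⟩
  simp only [mul_assoc (4 * lam ^ 2)]
  rw [integral_const_mul]
  set D := ∫ x, dist x₀ x ^ 2 * Real.exp (-2 * lam * dist x₀ x ^ 2) ∂μ
  set E := ∫ x, Real.exp (-2 * lam * dist x₀ x ^ 2) ∂μ
  linear_combination (2 * lam * D + N / 2 * E) * hvirial
end

section
/- Let (X,d) be a proper metric space, μ a Borel measure on X that is finite and positive on every bounded open set, x₀ ∈ X, N > 1 and k > 0, and suppose μ(B_ρ(x₀)) = k ω_N ρ^N for all ρ > 0. Then the constant N²/4 in the Heisenberg–Pauli–Weyl uncertainty principle is sharp: for every ε > 0 there exists a nonzero Lipschitz function u : X → ℝ with compact support such that (∫_X (lip u)² dμ) · (∫_X d(x₀,x)² u² dμ) ≤ (N²/4 + ε) · (∫_X u² dμ)². -/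
/-!
The test functions are the radial bumps `u = (1 - d_{x₀}²)₊ ^ (n + 1)`. The cone condition says
that the push-forward of `μ` under `d_{x₀}` is `k ω_N N t^(N-1) dt` on `(0, ∞)`, so every
integral in the quotient becomes a multiple of some `β(a, q) = ∫₀¹ t^a (1 - t²)^q dt`, and
`lip u` is bounded by the derivative of the profile at `d_{x₀}` because `d_{x₀}` is 1-Lipschitz.
Integration by parts gives two recurrences for `β`, from which the quotient of `u` is exactly
`N²/4 · (1 + (N + 2) / ((2n + 1)(N + 4n + 6)))`; this tends to `N²/4` (the rescaled bumps
approach the Gaussian, which is extremal in `ℝ^N`).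
-/

open MeasureTheory Filter

/-- The local Lipschitz constant `lip u(x) = limsup_{y → x} |u y - u x| / d(x,y)`
(equal to `0`, by convention of `Real` limsups, if `x` is an isolated point). -/
noncomputable def lipConst {X : Type*} [MetricSpace X] (u : X → ℝ) (x : X) : ℝ :=
  limsup (fun y => |u y - u x| / dist x y) (nhdsWithin x {x}ᶜ)

open Set Metric
open scoped ENNReal Topology

section LocalLipschitz

variable {X : Type*} [MetricSpace X]

theorem lipConst_nonneg (u : X → ℝ) (x : X) : 0 ≤ lipConst u x := by
  rcases (𝓝[≠] x).eq_or_neBot with hbot | hne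
  · simp [lipConst, hbot, limsup_eq]
  · refine Real.sInf_nonneg fun a ha => ?_
    have ha' : ∀ᶠ y in 𝓝[≠] x, |u y - u x| / dist x y ≤ a := ha
    obtain ⟨y, hy⟩ := ha'.exists
    exact (div_nonneg (abs_nonneg _) dist_nonneg).trans hy

theorem lipConst_le_of_eventually_le {u : X → ℝ} {x : X} {C : ℝ} (hC : 0 ≤ C)
    (h : ∀ᶠ y in 𝓝[≠] x, |u y - u x| ≤ C * dist x y) : lipConst u x ≤ C := by
  rcases (𝓝[≠] x).eq_or_neBot with hbot | hne
  · simpa [lipConst, hbot, limsup_eq, Real.sInf_univ] using hC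
  refine limsup_le_of_le (isCoboundedUnder_le_of_le _ fun y => by positivity) ?_
  filter_upwards [h] with y hy
  exact div_le_of_le_mul₀ dist_nonneg hC hy

theorem lipConst_comp_le_of_hasDerivAt {g : X → ℝ} (hg : LipschitzWith 1 g) {f : ℝ → ℝ}
    {f' : ℝ} {x : X} (hf : HasDerivAt f f' (g x)) :
    lipConst (fun y => f (g y)) x ≤ |f'| := by
  refine le_of_forall_pos_le_add fun η hη => lipConst_le_of_eventually_le (by positivity) ?_
  have hlin : ∀ᶠ s in 𝓝 (g x), ‖f s - f (g x) - (s - g x) • f'‖ ≤ η * ‖s - g x‖ :=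
    (hasDerivAt_iff_isLittleO.1 hf).def hη
  filter_upwards [nhdsWithin_le_nhds (hg.continuous.continuousAt.eventually hlin)] with y hy
  have hgy : |g y - g x| ≤ dist x y := by
    simpa [Real.dist_eq, dist_comm, abs_sub_comm] using hg.dist_le_mul y x
  rw [Real.norm_eq_abs, Real.norm_eq_abs, smul_eq_mul] at hy
  calc |f (g y) - f (g x)| ≤ |f'| * |g y - g x| + η * |g y - g x| := by
        rw [← abs_mul, mul_comm]
        linarith [abs_sub_abs_le_abs_sub (f (g y) - f (g x)) ((g y - g x) * f')]
    _ ≤ (|f'| + η) * dist x y := by rw [← add_mul]; gcongr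

end LocalLipschitz

noncomputable def bump (m : ℕ) (t : ℝ) : ℝ := max (1 - t ^ 2) 0 ^ m

theorem bump_zero_right (m : ℕ) : bump m 0 = 1 := by simp [bump]

theorem bump_of_sq_le_one (m : ℕ) {t : ℝ} (ht : t ^ 2 ≤ 1) : bump m t = (1 - t ^ 2) ^ m := by
  rw [bump, max_eq_left (by linarith)]

theorem bump_of_one_le_sq {m : ℕ} (hm : m ≠ 0) {t : ℝ} (ht : 1 ≤ t ^ 2) : bump m t = 0 := by
  rw [bump, max_eq_right (by linarith), zero_pow hm]

theorem bump_sq (m : ℕ) (t : ℝ) : bump m t ^ 2 = bump (2 * m) t := by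
  rw [bump, bump, ← pow_mul, mul_comm]

@[fun_prop]
theorem continuous_bump (m : ℕ) : Continuous (bump m) := by
  unfold bump; fun_prop

theorem hasDerivAt_max_zero_pow {n : ℕ} (hn : n ≠ 0) (s : ℝ) :
    HasDerivAt (fun s : ℝ => max s 0 ^ (n + 1)) ((n + 1) * max s 0 ^ n) s := by
  refine hasDerivAt_of_hasDerivAt_of_ne' (g := fun s : ℝ => (n + 1) * max s 0 ^ n) (x := 0)
    (fun y hy => ?_) (by fun_prop) (by fun_prop) s
  rcases hy.lt_or_gt with hy | hy
  · have hzero : (fun s : ℝ => max s 0 ^ (n + 1)) =ᶠ[𝓝 y] fun _ => 0 := by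
      filter_upwards [Iio_mem_nhds hy] with s hs
      rw [max_eq_right hs.le, zero_pow n.succ_ne_zero]
    rw [max_eq_right hy.le, zero_pow hn, mul_zero]
    exact (hasDerivAt_const y 0).congr_of_eventuallyEq hzero
  · have hpow : (fun s : ℝ => max s 0 ^ (n + 1)) =ᶠ[𝓝 y] fun s => s ^ (n + 1) := by
      filter_upwards [Ioi_mem_nhds hy] with s hs
      rw [max_eq_left hs.le]
    rw [max_eq_left hy.le]
    simpa using (hasDerivAt_pow (n + 1) y).congr_of_eventuallyEq hpow

theorem hasDerivAt_bump {n : ℕ} (hn : n ≠ 0) (t : ℝ) :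
    HasDerivAt (bump (n + 1)) (-(2 * (n + 1) * t) * bump n t) t := by
  have hinner : HasDerivAt (fun t : ℝ => 1 - t ^ 2) (-(2 * t)) t := by
    simpa using (hasDerivAt_pow 2 t).const_sub 1
  refine ((hasDerivAt_max_zero_pow hn _).comp t hinner).congr_deriv ?_
  rw [bump]; ring

theorem hasCompactSupport_bump {m : ℕ} (hm : m ≠ 0) : HasCompactSupport (bump m) := by
  refine HasCompactSupport.intro (isCompact_Icc (a := -1) (b := 1)) fun t ht => ?_
  rw [mem_Icc, not_and_or, not_le, not_le] at ht
  exact bump_of_one_le_sq hm (by rcases ht with ht | ht <;> nlinarith)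

theorem exists_lipschitzWith_bump {n : ℕ} (hn : n ≠ 0) : ∃ K, LipschitzWith K (bump (n + 1)) := by
  refine ContDiff.lipschitzWith_of_hasCompactSupport (hasCompactSupport_bump n.succ_ne_zero)
    (contDiff_one_iff_deriv.2 ⟨fun t => (hasDerivAt_bump hn t).differentiableAt, ?_⟩) one_ne_zero
  rw [funext fun t => (hasDerivAt_bump hn t).deriv]
  exact (by fun_prop : Continuous fun t : ℝ => -(2 * (n + 1) * t)).mul (continuous_bump n)

/-- Half of Euler's `B((a + 1) / 2, q + 1)`, after the substitution `s = t²`. -/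
noncomputable def betaSq (a : ℝ) (q : ℕ) : ℝ := ∫ t in (0 : ℝ)..1, t ^ a * (1 - t ^ 2) ^ q

section BetaSq

variable {a : ℝ}

theorem intervalIntegrable_betaSq (ha : 0 ≤ a) (q : ℕ) :
    IntervalIntegrable (fun t : ℝ => t ^ a * (1 - t ^ 2) ^ q) volume 0 1 :=
  ((Real.continuous_rpow_const ha).mul (by fun_prop)).intervalIntegrable 0 1

theorem betaSq_pos (ha : 0 ≤ a) (q : ℕ) : 0 < betaSq a q := by
  refine intervalIntegral.intervalIntegral_pos_of_pos_on (intervalIntegrable_betaSq ha q)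
    (fun t ht => ?_) one_pos
  have : 0 < 1 - t ^ 2 := by nlinarith [ht.1, ht.2]
  have := Real.rpow_pos_of_pos ht.1 a
  positivity

theorem betaSq_succ_add_betaSq_add_two (ha : 0 ≤ a) (q : ℕ) :
    betaSq a (q + 1) + betaSq (a + 2) q = betaSq a q := by
  rw [betaSq, betaSq, betaSq, ← intervalIntegral.integral_add (intervalIntegrable_betaSq ha _)
    (intervalIntegrable_betaSq (by linarith) _)]
  refine intervalIntegral.integral_congr fun t ht => ?_
  rw [uIcc_of_le zero_le_one] at ht
  simp only [Real.rpow_add' ht.1 (by linarith : a + 2 ≠ 0), Real.rpow_two]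
  ring

theorem mul_betaSq_succ (ha : 0 ≤ a) (q : ℕ) :
    (a + 1) * betaSq a (q + 1) = 2 * (q + 1) * betaSq (a + 2) q := by
  have hu : ∀ t ∈ uIcc (0 : ℝ) 1, HasDerivAt (fun t : ℝ => t ^ (a + 1)) ((a + 1) * t ^ a) t :=
    fun t _ => by simpa using Real.hasDerivAt_rpow_const (x := t) (p := a + 1) (by right; linarith)
  have hv : ∀ t ∈ uIcc (0 : ℝ) 1, HasDerivAt (fun t : ℝ => (1 - t ^ 2) ^ (q + 1))
      ((q + 1 : ℕ) * (1 - t ^ 2) ^ q * -(2 * t)) t := fun t _ => by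
    simpa using ((hasDerivAt_pow 2 t).const_sub 1).fun_pow (q + 1)
  have hibp := intervalIntegral.integral_mul_deriv_eq_deriv_mul hu hv
    (((Real.continuous_rpow_const ha).const_smul (a + 1)).intervalIntegrable 0 1)
    (Continuous.intervalIntegrable (by fun_prop) 0 1)
  have hleft : ∫ t in (0 : ℝ)..1, t ^ (a + 1) * ((q + 1 : ℕ) * (1 - t ^ 2) ^ q * -(2 * t)) =
      -(2 * (q + 1)) * betaSq (a + 2) q := by
    rw [betaSq, ← intervalIntegral.integral_const_mul]
    refine intervalIntegral.integral_congr fun t ht => ?_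
    rw [uIcc_of_le zero_le_one] at ht
    simp only [show a + 2 = a + 1 + 1 by ring,
      Real.rpow_add_one' ht.1 (by linarith : a + 1 + 1 ≠ 0)]
    push_cast; ring
  have hright : ∫ t in (0 : ℝ)..1, (a + 1) * t ^ a * (1 - t ^ 2) ^ (q + 1) =
      (a + 1) * betaSq a (q + 1) := by
    simp only [mul_assoc, intervalIntegral.integral_const_mul, betaSq]
  rw [hleft, hright, Real.zero_rpow (by linarith)] at hibp
  norm_num at hibp
  linarith

theorem betaSq_succ_eq (ha : 0 ≤ a) (q : ℕ) :
    (a + 2 * q + 3) * betaSq a (q + 1) = 2 * (q + 1) * betaSq a q := by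
  linear_combination mul_betaSq_succ ha q + 2 * (q + 1) * betaSq_succ_add_betaSq_add_two ha q

theorem betaSq_add_two_eq (ha : 0 ≤ a) (q : ℕ) :
    (a + 2 * q + 3) * betaSq (a + 2) q = (a + 1) * betaSq a q := by
  linear_combination -mul_betaSq_succ ha q + (a + 1) * betaSq_succ_add_betaSq_add_two ha q

theorem betaSq_hpw_eq {N : ℝ} (hN : 1 ≤ N) (n : ℕ) :
    4 * (n + 1) ^ 2 * betaSq (N + 1) (2 * n) * betaSq (N + 1) (2 * n + 2) =
      N ^ 2 / 4 * (1 + (N + 2) / ((2 * n + 1) * (N + 4 * n + 6))) *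
        betaSq (N - 1) (2 * n + 2) ^ 2 := by
  have hS := betaSq_add_two_eq (a := N - 1) (by linarith) (2 * n + 2)
  have hP := betaSq_succ_eq (a := N + 1) (by linarith) (2 * n)
  have hQ := betaSq_succ_eq (a := N + 1) (by linarith) (2 * n + 1)
  rw [show N - 1 + 2 = N + 1 by ring] at hS
  set P := betaSq (N + 1) (2 * n)
  set Q := betaSq (N + 1) (2 * n + 1)
  set R := betaSq (N + 1) (2 * n + 2)
  set S := betaSq (N - 1) (2 * n + 2)
  push_cast at hS hP hQ
  field_simp
  linear_combination -8 * (n + 1) ^ 2 * (N + 4 * n + 6) * R * hP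
    - 2 * (n + 1) * (N + 4 * n + 6) * (N + 4 * n + 4) * R * hQ
    + 2 * (n + 1) * (N + 4 * n + 4) * ((N + 4 * n + 6) * R + N * S) * hS

theorem exists_betaSq_hpw_le {N ε : ℝ} (hN : 1 ≤ N) (hε : 0 < ε) :
    ∃ n : ℕ, n ≠ 0 ∧ 4 * (n + 1) ^ 2 * betaSq (N + 1) (2 * n) * betaSq (N + 1) (2 * n + 2) ≤
      (N ^ 2 / 4 + ε) * betaSq (N - 1) (2 * n + 2) ^ 2 := by
  obtain ⟨n, hn⟩ := exists_nat_gt (N ^ 2 * (N + 2) / (4 * ε))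
  have hn0 : (0 : ℝ) < n := lt_trans (by positivity) hn
  refine ⟨n, by exact_mod_cast hn0.ne', ?_⟩
  rw [betaSq_hpw_eq hN]
  gcongr ?_ * _
  rw [div_lt_iff₀ (by positivity)] at hn
  calc N ^ 2 / 4 * (1 + (N + 2) / ((2 * n + 1) * (N + 4 * n + 6)))
      ≤ N ^ 2 / 4 * (1 + (N + 2) / n) := by gcongr; nlinarith
    _ ≤ N ^ 2 / 4 + ε := by
      rw [mul_add, mul_one, add_le_add_iff_left, ← mul_div_assoc, div_le_iff₀ hn0]
      linarith

theorem measure_ext_of_Iio {μ ν : Measure ℝ} (hμ : ∀ a, μ (Iio a) ≠ ∞)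
    (h : ∀ a, μ (Iio a) = ν (Iio a)) : μ = ν :=
  Measure.ext_of_generateFrom_of_iUnion (range Iio) (fun n : ℕ => Iio (n : ℝ))
    (BorelSpace.measurable_eq.trans (borel_eq_generateFrom_Iio ℝ)) isPiSystem_Iio
    (iUnion_eq_univ_iff.2 fun x => exists_nat_gt x) (fun _ => mem_range_self _)
    (fun _ => hμ _) (by rintro _ ⟨a, rfl⟩; exact h a)

section VolumeCone

variable {N C : ℝ}

theorem withDensity_rpow_Iio (hN : 0 < N) (hC : 0 ≤ C) {ρ : ℝ} (hρ : 0 ≤ ρ) :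
    (volume.restrict (Ioi 0)).withDensity (fun t => ENNReal.ofReal (C * N * t ^ (N - 1))) (Iio ρ) =
      ENNReal.ofReal (C * ρ ^ N) := by
  have hint : IntegrableOn (fun t : ℝ => C * N * t ^ (N - 1)) (Ioc 0 ρ) :=
    (intervalIntegrable_iff_integrableOn_Ioc_of_le hρ).1
      ((intervalIntegral.intervalIntegrable_rpow' (by linarith)).const_mul _)
  rw [withDensity_apply _ measurableSet_Iio, Measure.restrict_restrict measurableSet_Iio,
    Iio_inter_Ioi, ← ofReal_integral_eq_lintegral_ofReal (hint.mono_set Ioo_subset_Ioc_self)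
      ((ae_restrict_iff' measurableSet_Ioo).2 (ae_of_all _ fun t ht => by
        have := Real.rpow_pos_of_pos ht.1 (N - 1); positivity)),
    ← integral_Ioc_eq_integral_Ioo, ← intervalIntegral.integral_of_le hρ,
    intervalIntegral.integral_const_mul, integral_rpow (by left; linarith), sub_add_cancel,
    Real.zero_rpow hN.ne', sub_zero]
  congr 1
  field_simp

variable {X : Type*} [MetricSpace X] [MeasurableSpace X] [BorelSpace X] {μ : Measure X} {x₀ : X}

theorem map_dist_eq_withDensity (hN : 0 < N) (hC : 0 ≤ C)
    (hcone : ∀ ρ > 0, μ (ball x₀ ρ) = ENNReal.ofReal (C * ρ ^ N)) :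
    μ.map (dist x₀) =
      (volume.restrict (Ioi 0)).withDensity fun t => ENNReal.ofReal (C * N * t ^ (N - 1)) := by
  have hball : ∀ ρ, μ.map (dist x₀) (Iio ρ) = μ (ball x₀ ρ) := fun ρ => by
    rw [Measure.map_apply (LipschitzWith.dist_right x₀).continuous.measurable measurableSet_Iio]
    congr 1
    ext x
    simp [dist_comm]
  refine measure_ext_of_Iio (fun ρ => ?_) fun ρ => ?_ <;> rw [hball] <;>
    rcases le_or_gt ρ 0 with hρ | hρ
  · simp [ball_eq_empty.2 hρ]
  · simp [hcone ρ hρ]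
  · rw [ball_eq_empty.2 hρ, measure_empty, eq_comm]
    refine measure_mono_null (Iio_subset_Iio hρ) ?_
    rw [withDensity_rpow_Iio hN hC le_rfl, Real.zero_rpow hN.ne', mul_zero, ENNReal.ofReal_zero]
  · rw [hcone ρ hρ, withDensity_rpow_Iio hN hC hρ.le]

theorem integral_comp_dist_eq (hN : 0 < N) (hC : 0 ≤ C)
    (hcone : ∀ ρ > 0, μ (ball x₀ ρ) = ENNReal.ofReal (C * ρ ^ N)) {g : ℝ → ℝ}
    (hg : Measurable g) :
    ∫ x, g (dist x₀ x) ∂μ = C * N * ∫ t in Ioi 0, t ^ (N - 1) * g t := by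
  rw [← integral_map (LipschitzWith.dist_right x₀).continuous.aemeasurable
      hg.aestronglyMeasurable, map_dist_eq_withDensity hN hC hcone,
    integral_withDensity_eq_integral_toReal_smul (by fun_prop)
      (ae_of_all _ fun _ => ENNReal.ofReal_lt_top), ← integral_const_mul]
  refine setIntegral_congr_fun measurableSet_Ioi fun t ht => ?_
  have := Real.rpow_pos_of_pos ht (N - 1)
  rw [ENNReal.toReal_ofReal (by positivity), smul_eq_mul]
  ring

theorem integral_dist_pow_mul_bump (hN : 0 < N) (hC : 0 ≤ C)
    (hcone : ∀ ρ > 0, μ (ball x₀ ρ) = ENNReal.ofReal (C * ρ ^ N)) (p : ℕ) {q : ℕ} (hq : q ≠ 0) :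
    ∫ x, dist x₀ x ^ p * bump q (dist x₀ x) ∂μ = C * N * betaSq (N - 1 + p) q := by
  rw [integral_comp_dist_eq hN hC hcone (g := fun t => t ^ p * bump q t)
    (by fun_prop)]
  congr 1
  calc ∫ t in Ioi 0, t ^ (N - 1) * (t ^ p * bump q t)
      = ∫ t in Ioi 0, t ^ (N - 1 + p) * bump q t :=
        setIntegral_congr_fun measurableSet_Ioi fun t ht => by
          rw [Real.rpow_add ht, Real.rpow_natCast]; ring
    _ = ∫ t in Ioc 0 1, t ^ (N - 1 + p) * bump q t :=
        setIntegral_eq_of_subset_of_forall_sdiff_eq_zero measurableSet_Ioi Ioc_subset_Ioi_self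
          fun t ⟨ht0, ht1⟩ => by
            have : 1 < t := by simp only [mem_Ioc, not_and, not_le] at ht1; exact ht1 ht0
            rw [bump_of_one_le_sq hq (by nlinarith), mul_zero]
    _ = betaSq (N - 1 + p) q := by
        rw [betaSq, intervalIntegral.integral_of_le zero_le_one]
        refine setIntegral_congr_fun measurableSet_Ioc fun t ht => ?_
        rw [bump_of_sq_le_one q (by nlinarith [ht.1, ht.2])]

end VolumeCone

section Radial

variable {X : Type*} [MetricSpace X]

theorem hasCompactSupport_bump_comp_dist [ProperSpace X] {m : ℕ} (hm : m ≠ 0) (x₀ : X) :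
    HasCompactSupport fun x => bump m (dist x₀ x) :=
  HasCompactSupport.intro (isCompact_closedBall x₀ 1) fun x hx => by
    have : 1 < dist x₀ x := by simpa [dist_comm] using hx
    exact bump_of_one_le_sq hm (by nlinarith)

variable [MeasurableSpace X] {μ : Measure X} {x₀ : X}

theorem isFiniteMeasureOnCompacts_of_ball (h : ∀ ρ > 0, μ (ball x₀ ρ) ≠ ∞) :
    IsFiniteMeasureOnCompacts μ where
  lt_top_of_isCompact K hK := by
    obtain ⟨ρ, hρ, hKρ⟩ := hK.isBounded.subset_ball_lt 0 x₀
    exact (measure_mono hKρ).trans_lt (h ρ hρ).lt_top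

variable [BorelSpace X] [ProperSpace X] {N C : ℝ}

theorem integral_sq_lipConst_bump_le (hN : 0 < N) (hC : 0 ≤ C)
    (hcone : ∀ ρ > 0, μ (ball x₀ ρ) = ENNReal.ofReal (C * ρ ^ N)) {n : ℕ} (hn : n ≠ 0) :
    ∫ x, lipConst (fun y => bump (n + 1) (dist x₀ y)) x ^ 2 ∂μ ≤
      4 * (n + 1) ^ 2 * (C * N * betaSq (N + 1) (2 * n)) := by
  have := isFiniteMeasureOnCompacts_of_ball (μ := μ) (x₀ := x₀) fun ρ hρ => by simp [hcone ρ hρ]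
  have hpt : ∀ x, lipConst (fun y => bump (n + 1) (dist x₀ y)) x ^ 2 ≤
      4 * (n + 1) ^ 2 * (dist x₀ x ^ 2 * bump (2 * n) (dist x₀ x)) := fun x =>
    calc _ ≤ |-(2 * (n + 1) * dist x₀ x) * bump n (dist x₀ x)| ^ 2 :=
          pow_le_pow_left₀ (lipConst_nonneg _ _) (lipConst_comp_le_of_hasDerivAt
            (LipschitzWith.dist_right x₀) (hasDerivAt_bump hn _)) 2
      _ = _ := by rw [sq_abs, ← bump_sq]; ring
  have hint :
      Integrable (fun x => 4 * (n + 1) ^ 2 * (dist x₀ x ^ 2 * bump (2 * n) (dist x₀ x))) μ :=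
    (by fun_prop : Continuous _).integrable_of_hasCompactSupport
      ((hasCompactSupport_bump_comp_dist (by omega) x₀).mul_left.mul_left)
  calc _ ≤ ∫ x, 4 * (n + 1) ^ 2 * (dist x₀ x ^ 2 * bump (2 * n) (dist x₀ x)) ∂μ :=
        integral_mono_of_nonneg (ae_of_all _ fun _ => sq_nonneg _) hint (ae_of_all _ hpt)
    _ = _ := by
      rw [integral_const_mul, integral_dist_pow_mul_bump hN hC hcone 2 (by omega)]
      norm_num [show N - 1 + 2 = N + 1 by ring]

end Radial

theorem hpw_constant_sharp_on_volume_cone_general {X : Type*} [MetricSpace X] [ProperSpace X]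
    [MeasurableSpace X] [BorelSpace X] (μ : Measure X)
    (x₀ : X) (N k : ℝ) (hN : 1 < N) (hk : 0 < k)
    (hcone : ∀ ρ > (0:ℝ), μ (Metric.ball x₀ ρ) = ENNReal.ofReal (k * omegaN N * ρ ^ N)) :
    ∀ ε > (0:ℝ), ∃ u : X → ℝ, (∃ K : NNReal, LipschitzWith K u) ∧
      HasCompactSupport u ∧ u ≠ 0 ∧
      (∫ x, (lipConst u x) ^ 2 ∂μ) * (∫ x, dist x₀ x ^ 2 * (u x) ^ 2 ∂μ) ≤
        (N ^ 2 / 4 + ε) * (∫ x, (u x) ^ 2 ∂μ) ^ 2 := by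
  intro ε hε
  have hN0 : 0 < N := by linarith
  have hC : 0 ≤ k * omegaN N := by
    have := Real.Gamma_pos_of_pos (by linarith : 0 < N / 2 + 1)
    unfold omegaN; positivity
  obtain ⟨n, hn, hquot⟩ := exists_betaSq_hpw_le hN.le hε
  obtain ⟨K, hK⟩ := exists_lipschitzWith_bump hn
  have hmoment (p : ℕ) : ∫ x, dist x₀ x ^ p * bump (n + 1) (dist x₀ x) ^ 2 ∂μ =
      k * omegaN N * N * betaSq (N - 1 + p) (2 * n + 2) := by
    simpa only [bump_sq, mul_add, mul_one] using
      integral_dist_pow_mul_bump hN0 hC hcone p (q := 2 * (n + 1)) (by omega)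
  refine ⟨fun x => bump (n + 1) (dist x₀ x), ⟨K * 1, hK.comp (LipschitzWith.dist_right x₀)⟩,
    hasCompactSupport_bump_comp_dist n.succ_ne_zero x₀,
    fun h => by simpa [bump_zero_right] using congr_fun h x₀, ?_⟩
  have hspread := hmoment 2
  have hmass := hmoment 0
  simp only [pow_zero, one_mul, Nat.cast_zero, add_zero, Nat.cast_ofNat,
    show N - 1 + 2 = N + 1 by ring] at hspread hmass
  rw [hspread, hmass]
  have := betaSq_pos (a := N + 1) (by linarith) (2 * n + 2)
  calc _ ≤ 4 * (n + 1) ^ 2 * (k * omegaN N * N * betaSq (N + 1) (2 * n)) *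
        (k * omegaN N * N * betaSq (N + 1) (2 * n + 2)) := by
        gcongr
        exact integral_sq_lipConst_bump_le hN0 hC hcone hn
    _ = (k * omegaN N * N) ^ 2 *
        (4 * (n + 1) ^ 2 * betaSq (N + 1) (2 * n) * betaSq (N + 1) (2 * n + 2)) := by ring
    _ ≤ (k * omegaN N * N) ^ 2 * ((N ^ 2 / 4 + ε) * betaSq (N - 1) (2 * n + 2) ^ 2) := by gcongr
    _ = _ := by ring

/-- Sharpness of the constant `N²/4` in the Heisenberg–Pauli–Weyl uncertainty
principle on a volume cone. -/
theorem hpw_constant_sharp_on_volume_cone {X : Type*} [MetricSpace X] [ProperSpace X]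
    [MeasurableSpace X] [BorelSpace X] (μ : Measure X)
    (hμ : ∀ U : Set X, IsOpen U → Bornology.IsBounded U → U.Nonempty →
      0 < μ U ∧ μ U ≠ ⊤)
    (x₀ : X) (N k : ℝ) (hN : 1 < N) (hk : 0 < k)
    (hcone : ∀ ρ > (0:ℝ), μ (Metric.ball x₀ ρ) = ENNReal.ofReal (k * omegaN N * ρ ^ N)) :
    ∀ ε > (0:ℝ), ∃ u : X → ℝ, (∃ K : NNReal, LipschitzWith K u) ∧
      HasCompactSupport u ∧ u ≠ 0 ∧
      (∫ x, (lipConst u x) ^ 2 ∂μ) * (∫ x, dist x₀ x ^ 2 * (u x) ^ 2 ∂μ) ≤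
        (N ^ 2 / 4 + ε) * (∫ x, (u x) ^ 2 ∂μ) ^ 2 :=
  hpw_constant_sharp_on_volume_cone_general μ x₀ N k hN hk hcone
end BetaSq
end

section
/- Let N > 0 and C > 0 be real numbers and let h : (0,∞) → [0,∞) be a non-decreasing function with h(ρ) ≤ C ρ^N for all ρ > 0. If ∫₀^∞ (h(ρ) − C ρ^N) ρ e^{−2λρ²} dρ ≥ 0 for every λ > 0, then h(ρ) = C ρ^N for all ρ > 0. -/
open MeasureTheory Set

/-- If a non-decreasing function `h` on `(0,∞)` satisfies `h(ρ) ≤ C ρ^N` and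
`∫₀^∞ (h(ρ) - C ρ^N) ρ e^{-2λρ²} dρ ≥ 0` for every `λ > 0`, then `h(ρ) = C ρ^N`. -/
theorem eq_of_gaussian_moment_nonneg (N C : ℝ) (hN : 0 < N) (hC : 0 < C)
    (h : ℝ → ℝ) (hmono : MonotoneOn h (Ioi 0)) (hnonneg : ∀ ρ > (0:ℝ), 0 ≤ h ρ)
    (hle : ∀ ρ > (0:ℝ), h ρ ≤ C * ρ ^ N)
    (hint : ∀ lam > (0:ℝ),
      0 ≤ ∫ ρ in Ioi (0:ℝ), (h ρ - C * ρ ^ N) * ρ * Real.exp (-2 * lam * ρ ^ 2)) :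
    ∀ ρ > (0:ℝ), h ρ = C * ρ ^ N := by
  set f : ℝ → ℝ := fun ρ => (C * ρ ^ N - h ρ) * ρ * Real.exp (-2 * 1 * ρ ^ 2) with hfdef
  have hhmeas : AEMeasurable h (volume.restrict (Ioi (0:ℝ))) :=
    aemeasurable_restrict_of_monotoneOn measurableSet_Ioi hmono
  have hfmeas : AEMeasurable f (volume.restrict (Ioi (0:ℝ))) := by
    apply AEMeasurable.mul
    apply AEMeasurable.mul
    · exact (aemeasurable_const.mul
        (((by fun_prop : Measurable (fun x : ℝ => x ^ N))).aemeasurable)).sub hhmeas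
    · exact measurable_id.aemeasurable
    · exact (Real.measurable_exp.comp (by fun_prop)).aemeasurable
  have hfnonneg : ∀ x ∈ Ioi (0:ℝ), 0 ≤ f x := by
    intro x hx
    have hx0 : (0:ℝ) < x := hx
    have := hle x hx0
    have : 0 ≤ C * x ^ N - h x := by linarith
    positivity
  -- integrability of f on Ioi 0
  have hdom : IntegrableOn (fun x : ℝ => C * (x ^ (N + 1) * Real.exp (-2 * x ^ 2)))
      (Ioi (0:ℝ)) := by
    exact (integrableOn_rpow_mul_exp_neg_mul_sq (by norm_num : (0:ℝ) < 2)
      (by linarith : (-1:ℝ) < N + 1)).const_mul C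
  have hfint : IntegrableOn f (Ioi (0:ℝ)) := by
    apply Integrable.mono' hdom hfmeas.aestronglyMeasurable
    filter_upwards [ae_restrict_mem measurableSet_Ioi] with x hx
    have hx0 : (0:ℝ) < x := hx
    rw [Real.norm_of_nonneg (hfnonneg x hx)]
    have h1 : C * x ^ N - h x ≤ C * x ^ N := by
      have := hnonneg x hx0; linarith
    have hxN : (0:ℝ) ≤ x ^ N := Real.rpow_nonneg hx0.le N
    have hexp : (0:ℝ) < Real.exp (-2 * 1 * x ^ 2) := Real.exp_pos _
    have h2 : (C * x ^ N - h x) * x ≤ C * x ^ N * x := by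
      nlinarith [hnonneg x hx0]
    calc (C * x ^ N - h x) * x * Real.exp (-2 * 1 * x ^ 2)
        ≤ C * x ^ N * x * Real.exp (-2 * 1 * x ^ 2) := by
          exact mul_le_mul_of_nonneg_right h2 hexp.le
      _ = C * (x ^ (N + 1) * Real.exp (-2 * x ^ 2)) := by
          rw [Real.rpow_add hx0, Real.rpow_one]
          ring_nf
  -- the integral of f is zero
  have hint1 := hint 1 one_pos
  have hneg : ∀ x : ℝ, (h x - C * x ^ N) * x * Real.exp (-2 * 1 * x ^ 2) = -f x := by
    intro x; simp [hfdef]; ring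
  have hile : ∫ x in Ioi (0:ℝ), f x ≤ 0 := by
    have : (0:ℝ) ≤ ∫ x in Ioi (0:ℝ), -f x := by
      simpa only [hneg] using hint1
    rw [integral_neg] at this
    linarith
  have hige : 0 ≤ ∫ x in Ioi (0:ℝ), f x :=
    setIntegral_nonneg measurableSet_Ioi hfnonneg
  have hizero : ∫ x in Ioi (0:ℝ), f x = 0 := le_antisymm hile hige
  have hfae : ∀ᵐ x ∂(volume.restrict (Ioi (0:ℝ))), f x = 0 := by
    have h0 : (fun x => f x) =ᵐ[volume.restrict (Ioi (0:ℝ))] 0 := by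
      refine (integral_eq_zero_iff_of_nonneg_ae ?_ hfint).mp hizero
      filter_upwards [ae_restrict_mem measurableSet_Ioi] with x hx
      exact hfnonneg x hx
    filter_upwards [h0] with x hx using hx
  have hkey : ∀ᵐ x : ℝ, x ∈ Ioi (0:ℝ) → h x = C * x ^ N := by
    have := (ae_restrict_iff' measurableSet_Ioi).mp hfae
    filter_upwards [this] with x hx hxmem
    have hx0 : (0:ℝ) < x := hxmem
    have hfx := hx hxmem
    have hexp : (0:ℝ) < Real.exp (-2 * 1 * x ^ 2) := Real.exp_pos _
    have hmul : (0:ℝ) < x * Real.exp (-2 * 1 * x ^ 2) := mul_pos hx0 hexp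
    have : (C * x ^ N - h x) * (x * Real.exp (-2 * 1 * x ^ 2)) = 0 := by
      rw [← mul_assoc]; exact hfx
    rcases mul_eq_zero.mp this with h1 | h2
    · linarith
    · exact absurd h2 hmul.ne'
  -- conclude pointwise using monotonicity
  intro ρ hρ
  refine le_antisymm (hle ρ hρ) ?_
  refine le_of_forall_pos_le_add ?_
  intro ε hε
  -- continuity of x ↦ C * x ^ N at ρ
  have hcont : ContinuousAt (fun x : ℝ => C * x ^ N) ρ :=
    continuousAt_const.mul (Real.continuousAt_rpow_const ρ N (Or.inl hρ.ne'))
  rcases Metric.continuousAt_iff.mp hcont ε hε with ⟨δ, hδ, hδ'⟩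
  set a : ℝ := max (ρ - δ) (ρ / 2) with hadef
  have ha0 : 0 < a := lt_max_of_lt_right (by linarith)
  have haρ : a < ρ := max_lt (by linarith) (by linarith)
  -- find a point of equality in (a, ρ)
  have hZ : volume {x : ℝ | ¬ (x ∈ Ioi (0:ℝ) → h x = C * x ^ N)} = 0 := hkey
  have hsub : ¬ (Ioo a ρ ⊆ {x : ℝ | ¬ (x ∈ Ioi (0:ℝ) → h x = C * x ^ N)}) := by
    intro hsub
    have h1 : volume (Ioo a ρ) = 0 := measure_mono_null hsub hZ
    rw [Real.volume_Ioo] at h1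
    have : ρ - a ≤ 0 := by
      by_contra hcon
      push_neg at hcon
      exact (ENNReal.ofReal_pos.mpr hcon).ne' h1
    linarith
  rcases not_subset.mp hsub with ⟨x, hxmem, hxP⟩
  simp only [mem_setOf_eq, not_not] at hxP
  have hx0 : (0:ℝ) < x := lt_trans ha0 hxmem.1
  have hxeq : h x = C * x ^ N := hxP hx0
  have hdist : dist x ρ < δ := by
    rw [Real.dist_eq, abs_lt]
    constructor
    · have : ρ - δ ≤ a := le_max_left _ _
      have := hxmem.1
      linarith
    · have := hxmem.2; linarith
  have hclose := hδ' hdist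
  rw [Real.dist_eq, abs_lt] at hclose
  have h1 : C * ρ ^ N < C * x ^ N + ε := by linarith [hclose.1]
  have h2 : h x ≤ h ρ := hmono hx0 hρ hxmem.2.le
  linarith [hxeq ▸ h2]
end
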